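/- Given a binary class F ⊆ {0,1}^X, the class mix(F) ⊆ [0,1]^{Δ°(X)} (obtained by averaging: f(P) := E_{x∼P}[f(x)] for finite-support P) satisfies sfat_α(mix(F)) ≤ O(Ldim(F)·log(Ldim(F)/α)) for all α > 0. -/

import Mathlib

/-!
Let `mix(F)` `α`-shatter a tree of depth `N`, with distributions `P w` and thresholds `s w` at
the nodes `w`, and pick a witness `f_ζ ∈ F` for each of the `2 ^ N` sign patterns `ζ`. Hoeffding's
inequality and a union bound give at every node a sample of `m = O(N / α²)` points on which the
empirical means of all `f_ζ` are `α / 4`-close to their `P w`-means. Replacing each node by its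
sample gives an `X`-valued tree of depth `N m` along which the labels of `f_ζ` encode `ζ`: the
fraction of ones in each block tells on which side of `s w` the mean of `f_ζ` lies. So `F`
realizes at least `2 ^ N` label sequences on this tree, while the Sauer–Shelah lemma for trees
allows at most `(N m + 1) ^ Ldim F`, and `2 ^ N ≤ (N m + 1) ^ d` forces `N = O(d log (d / α))`.
-/

/-- The node of a binary tree at depth `t` along the sign path `ε` is indexed by the
prefix `(ε 0, …, ε (t-1))`. -/
def pathPrefix (ε : ℕ → Bool) (t : ℕ) : List Bool := List.ofFn (fun i : Fin t => ε i)

/-- The pair of trees `(x, s)` of depth `d` is `α`-shattered by `F`: for every sign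
pattern `ε` there is `f ∈ F` achieving margin `α/2` with the prescribed sign at every
node along the path `ε`. -/
def Shatters {Z : Type*} (F : Set (Z → ℝ)) (α : ℝ) (d : ℕ)
    (x : List Bool → Z) (s : List Bool → ℝ) : Prop :=
  ∀ ε : ℕ → Bool, ∃ f ∈ F, ∀ t < d,
    (if ε t then f (x (pathPrefix ε t)) - s (pathPrefix ε t)
      else s (pathPrefix ε t) - f (x (pathPrefix ε t))) ≥ α / 2

/-- `F` `α`-shatters some pair of trees of depth `d`. -/
def IsShattered {Z : Type*} (F : Set (Z → ℝ)) (α : ℝ) (d : ℕ) : Prop :=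
  ∃ x s, Shatters F α d x s

/-- The sequential fat-shattering dimension of `F` at scale `α`: the largest depth `d`
(possibly `⊤`) such that some pair of trees of depth `d` is `α`-shattered by `F`. -/
noncomputable def sfat {Z : Type*} (F : Set (Z → ℝ)) (α : ℝ) : ℕ∞ :=
  sSup {n : ℕ∞ | ∃ d : ℕ, n = (d : ℕ∞) ∧ IsShattered F α d}

/-- A binary-shattered tree for a `{0,1}`-valued class: at each node along every path,
both labels are realized by members of `F`. -/
def BShatters {X : Type*} (F : Set (X → ℝ)) (d : ℕ) (x : List Bool → X) : Prop :=
  ∀ ε : ℕ → Bool, ∃ f ∈ F, ∀ t < d,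
    f (x (pathPrefix ε t)) = if ε t then 1 else 0

/-- The Littlestone dimension of a `{0,1}`-valued class. -/
noncomputable def Ldim {X : Type*} (F : Set (X → ℝ)) : ℕ∞ :=
  sSup {n : ℕ∞ | ∃ d : ℕ, n = (d : ℕ∞) ∧ ∃ x, BShatters F d x}

/-- Finite-support probability distributions on `X`. -/
def FinDist (X : Type*) : Type _ :=
  {p : X →₀ ℝ // (∀ x, 0 ≤ p x) ∧ p.sum (fun _ v => v) = 1}

/-- The mixture class `mix(F) ⊆ [0,1]^{Δ°(X)}`: each `f ∈ F` induces the map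
`P ↦ E_{x∼P}[f(x)]` on finite-support distributions. -/
def mixClass {X : Type*} (F : Set (X → ℝ)) : Set (FinDist X → ℝ) :=
  {g | ∃ f ∈ F, ∀ p : FinDist X, g p = p.1.sum (fun x v => v * f x)}

section Paths

@[simp]
lemma length_pathPrefix (ε : ℕ → Bool) (t : ℕ) : (pathPrefix ε t).length = t := by
  simp [pathPrefix]

lemma pathPrefix_succ (ε : ℕ → Bool) (t : ℕ) :
    pathPrefix ε (t + 1) = ε 0 :: pathPrefix (fun i => ε (i + 1)) t := by
  simp [pathPrefix, List.ofFn_succ]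

def followPath (g : List Bool → Bool) : ℕ → List Bool
  | 0 => []
  | n + 1 => followPath g n ++ [g (followPath g n)]

variable (g : List Bool → Bool)

@[simp]
lemma length_followPath (n : ℕ) : (followPath g n).length = n := by
  induction n with
  | zero => rfl
  | succ n ih => simp [followPath, ih]

lemma take_followPath {a b : ℕ} (h : a ≤ b) : (followPath g b).take a = followPath g a := by
  induction b with
  | zero => rw [Nat.le_zero.mp h]; rfl
  | succ b ih =>
    rcases h.lt_or_eq with h | rfl
    · rw [followPath, List.take_append_of_le_length (by simp; omega), ih (by omega)]
    · exact List.take_of_length_le (by simp)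

lemma getD_followPath {j n : ℕ} (h : j < n) :
    (followPath g n).getD j false = g (followPath g j) := by
  rw [List.getD_eq_getElem?_getD, ← List.getElem?_take_of_succ, take_followPath g h, followPath,
    List.getElem?_append_right (by simp)]
  simp

lemma followPath_succ_eq_cons (n : ℕ) :
    followPath g (n + 1) = g [] :: followPath (fun w => g (g [] :: w)) n := by
  induction n with
  | zero => rfl
  | succ n ih => rw [followPath, ih]; rfl

lemma followPath_congr {g' : List Bool → Bool} {n : ℕ}
    (h : ∀ k < n, g (followPath g k) = g' (followPath g k)) :
    followPath g n = followPath g' n := by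
  induction n with
  | zero => rfl
  | succ n ih =>
    have ih' := ih fun k hk => h k (by omega)
    rw [followPath, followPath, ← ih', h n (by omega)]

lemma pathPrefix_eq_followPath (ε : ℕ → Bool) (n : ℕ) :
    pathPrefix ε n = followPath (fun w => ε w.length) n := by
  induction n with
  | zero => rfl
  | succ n ih =>
    rw [followPath, ← ih, pathPrefix, List.ofFn_succ', List.concat_eq_append]
    simp [pathPrefix]

end Paths

section Littlestone

variable {X : Type*}

def nodeTree (x₀ : X) (t₁ t₀ : List Bool → X) : List Bool → X
  | [] => x₀
  | true :: w => t₁ w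
  | false :: w => t₀ w

lemma BShatters.mono {F G : Set (X → ℝ)} (hFG : F ⊆ G) {d : ℕ} {y : List Bool → X}
    (h : BShatters F d y) : BShatters G d y := fun ε =>
  let ⟨f, hf, hfy⟩ := h ε
  ⟨f, hFG hf, hfy⟩

lemma bShatters_zero_iff {F : Set (X → ℝ)} {y : List Bool → X} :
    BShatters F 0 y ↔ F.Nonempty :=
  ⟨fun h => let ⟨f, hf, _⟩ := h fun _ => true; ⟨f, hf⟩,
    fun ⟨f, hf⟩ _ => ⟨f, hf, fun _ h => absurd h (Nat.not_lt_zero _)⟩⟩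

lemma bShatters_nodeTree {F : Set (X → ℝ)} {x₀ : X} {d : ℕ} {t₁ t₀ : List Bool → X}
    (h₁ : BShatters {f ∈ F | f x₀ = 1} d t₁) (h₀ : BShatters {f ∈ F | f x₀ = 0} d t₀) :
    BShatters F (d + 1) (nodeTree x₀ t₁ t₀) := by
  intro ε
  have key : ∀ f ∈ {f ∈ F | f x₀ = if ε 0 then 1 else 0},
      (∀ t < d, f ((if ε 0 then t₁ else t₀) (pathPrefix (fun i => ε (i + 1)) t)) =
        if ε (t + 1) then 1 else 0) →
      ∃ f ∈ F, ∀ t < d + 1, f (nodeTree x₀ t₁ t₀ (pathPrefix ε t)) = if ε t then 1 else 0 := by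
    rintro f ⟨hfF, hf₀⟩ hf
    refine ⟨f, hfF, fun t ht => ?_⟩
    cases t with
    | zero => exact hf₀
    | succ t =>
      rw [pathPrefix_succ]
      cases hε : ε 0 <;> simpa [nodeTree, hε] using hf t (by omega)
  cases hε : ε 0
  · obtain ⟨f, hf, hfy⟩ := h₀ fun i => ε (i + 1)
    exact key f (by simpa [hε] using hf) (by simpa [hε] using hfy)
  · obtain ⟨f, hf, hfy⟩ := h₁ fun i => ε (i + 1)
    exact key f (by simpa [hε] using hf) (by simpa [hε] using hfy)

lemma not_bShatters_of_Ldim_le {F : Set (X → ℝ)} {d : ℕ} (hd : Ldim F ≤ d)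
    (y : List Bool → X) : ¬ BShatters F (d + 1) y := fun hy => by
  have : ((d + 1 : ℕ) : ℕ∞) ≤ Ldim F := le_sSup ⟨d + 1, rfl, y, hy⟩
  exact absurd (Nat.cast_le.mp (this.trans hd)) (by omega)

/-- The branch of `y` selected by the labels of `f` along it, which is also the sequence of
those labels. The branches selected by the members of a class form its sequential `0`-cover. -/
noncomputable def labelPath (y : List Bool → X) (f : X → ℝ) (n : ℕ) : List Bool :=
  followPath (fun w => decide (f (y w) = 1)) n

lemma labelPath_succ (y : List Bool → X) (f : X → ℝ) (n : ℕ) :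
    labelPath y f (n + 1) =
      decide (f (y []) = 1) :: labelPath (fun w => y (decide (f (y []) = 1) :: w)) f n :=
  followPath_succ_eq_cons _ n

lemma labelPath_image_succ {F : Set (X → ℝ)} (hF : ∀ f ∈ F, ∀ x, f x = 0 ∨ f x = 1)
    (y : List Bool → X) (n : ℕ) :
    (labelPath y · (n + 1)) '' F =
      List.cons true '' ((labelPath (fun w => y (true :: w)) · n) '' {f ∈ F | f (y []) = 1}) ∪
      List.cons false '' ((labelPath (fun w => y (false :: w)) · n) '' {f ∈ F | f (y []) = 0}) := by
  have hsplit : F = {f ∈ F | f (y []) = 1} ∪ {f ∈ F | f (y []) = 0} := by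
    ext f
    constructor
    · intro hf
      rcases hF f hf (y []) with h | h
      · exact Or.inr ⟨hf, h⟩
      · exact Or.inl ⟨hf, h⟩
    · rintro (⟨hf, -⟩ | ⟨hf, -⟩) <;> exact hf
  conv_lhs => rw [hsplit]
  rw [Set.image_union, Set.image_image, Set.image_image]
  congr 1 <;> refine Set.image_congr fun f ⟨_, hf⟩ => ?_ <;> simp [labelPath_succ, hf]

lemma ncard_labelPath_image_succ_le {F : Set (X → ℝ)} (hF : ∀ f ∈ F, ∀ x, f x = 0 ∨ f x = 1)
    (y : List Bool → X) (n : ℕ) :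
    ((labelPath y · (n + 1)) '' F).ncard ≤
      ((labelPath (fun w => y (true :: w)) · n) '' {f ∈ F | f (y []) = 1}).ncard +
      ((labelPath (fun w => y (false :: w)) · n) '' {f ∈ F | f (y []) = 0}).ncard := by
  rw [labelPath_image_succ hF]
  refine (Set.ncard_union_le _ _).trans_eq ?_
  rw [Set.ncard_image_of_injective _ List.cons_injective,
    Set.ncard_image_of_injective _ List.cons_injective]

/-- The Sauer–Shelah lemma for trees. -/
theorem ncard_labelPath_image_le {F : Set (X → ℝ)} (hF : ∀ f ∈ F, ∀ x, f x = 0 ∨ f x = 1)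
    {d : ℕ} (hno : ∀ y, ¬ BShatters F (d + 1) y) (y : List Bool → X) (n : ℕ) :
    ((labelPath y · n) '' F).ncard ≤ (n + 1) ^ d := by
  induction n generalizing F d y with
  | zero =>
    have : (labelPath y · 0) '' F ⊆ {[]} := by
      rintro _ ⟨f, -, rfl⟩
      rfl
    simpa using Set.ncard_le_ncard this
  | succ n ih =>
    have hcard := ncard_labelPath_image_succ_le hF y n
    set F₁ := {f ∈ F | f (y []) = 1}
    set F₀ := {f ∈ F | f (y []) = 0}
    have hF₁ : ∀ f ∈ F₁, ∀ x, f x = 0 ∨ f x = 1 := fun f hf => hF f hf.1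
    have hF₀ : ∀ f ∈ F₀, ∀ x, f x = 0 ∨ f x = 1 := fun f hf => hF f hf.1
    have hno₁ : ∀ y, ¬ BShatters F₁ (d + 1) y := fun y h => hno y (h.mono fun _ hf => hf.1)
    have hno₀ : ∀ y, ¬ BShatters F₀ (d + 1) y := fun y h => hno y (h.mono fun _ hf => hf.1)
    have hsmall : (∀ t, ¬ BShatters F₁ d t) ∨ (∀ t, ¬ BShatters F₀ d t) := by
      by_contra! h
      obtain ⟨⟨t₁, h₁⟩, ⟨t₀, h₀⟩⟩ := h
      exact hno _ (bShatters_nodeTree h₁ h₀)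
    have h₁ := ih hF₁ hno₁ (fun w => y (true :: w))
    have h₀ := ih hF₀ hno₀ (fun w => y (false :: w))
    cases d with
    | zero =>
      have hempty : F₁ = ∅ ∨ F₀ = ∅ := by
        simpa only [bShatters_zero_iff, Set.not_nonempty_iff_eq_empty] using hsmall.imp (· y) (· y)
      rcases hempty with h | h <;>
        simp only [h, Set.image_empty, Set.ncard_empty, pow_zero] at hcard h₁ h₀ ⊢ <;> omega
    | succ e =>
      have hstep : (n + 1) ^ e + (n + 1) ^ (e + 1) ≤ (n + 1 + 1) ^ (e + 1) :=
        calc (n + 1) ^ e + (n + 1) ^ (e + 1) = (n + 1) ^ e * (n + 2) := by ring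
          _ ≤ (n + 2) ^ e * (n + 2) := Nat.mul_le_mul_right _ (Nat.pow_le_pow_left (by omega) e)
          _ = (n + 1 + 1) ^ (e + 1) := by ring
      rcases hsmall with h | h
      · have := ih hF₁ h (fun w => y (true :: w))
        omega
      · have := ih hF₀ h (fun w => y (false :: w))
        omega

end Littlestone

namespace FinDist

open Finset Real

variable {X : Type*}

/-- `E_{x∼P}[f(x)]`, the quantity by which `f ∈ F` induces an element of `mixClass F`. -/
def expect (P : FinDist X) (f : X → ℝ) : ℝ := P.1.sum fun x v => v * f x

variable (P : FinDist X)

lemma expect_eq_sum (f : X → ℝ) : P.expect f = ∑ x ∈ P.1.support, P.1 x * f x := rfl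

lemma expect_const (c : ℝ) : P.expect (fun _ => c) = c := by
  rw [expect_eq_sum, ← sum_mul]
  exact (congrArg (· * c) P.2.2).trans (one_mul c)

lemma expect_nonneg {f : X → ℝ} (h : ∀ x, 0 ≤ f x) : 0 ≤ P.expect f :=
  sum_nonneg fun x _ => mul_nonneg (P.2.1 x) (h x)

lemma expect_mono {f g : X → ℝ} (h : ∀ x, f x ≤ g x) : P.expect f ≤ P.expect g :=
  sum_le_sum fun x _ => mul_le_mul_of_nonneg_left (h x) (P.2.1 x)

lemma expect_add (f g : X → ℝ) : P.expect (fun x => f x + g x) = P.expect f + P.expect g := by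
  simp only [expect_eq_sum, mul_add, sum_add_distrib]

lemma expect_const_mul (c : ℝ) (f : X → ℝ) : P.expect (fun x => c * f x) = c * P.expect f := by
  simp only [expect_eq_sum, mul_sum]
  exact sum_congr rfl fun x _ => by ring

lemma expect_finset_sum {ι : Type*} (s : Finset ι) (f : ι → X → ℝ) :
    P.expect (fun x => ∑ i ∈ s, f i x) = ∑ i ∈ s, P.expect (f i) := by
  simp only [expect_eq_sum, mul_sum]
  exact sum_comm

lemma sum_piFinset_prod_mul (m : ℕ) (h : X → ℝ) :
    ∑ xs ∈ Fintype.piFinset (fun _ : Fin m => P.1.support), ∏ j, P.1 (xs j) * h (xs j) =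
      P.expect h ^ m := by
  refine (prod_univ_sum (fun _ => P.1.support) fun _ x => P.1 x * h x).symm.trans ?_
  rw [prod_const, card_univ, Fintype.card_fin, expect_eq_sum]

/-- The law of an i.i.d. sample of size `m` from `P`. -/
noncomputable def pi (m : ℕ) : FinDist (Fin m → X) :=
  ⟨Finsupp.onFinset (Fintype.piFinset fun _ => P.1.support) (fun xs => ∏ j, P.1 (xs j))
      fun xs hxs => Fintype.mem_piFinset.mpr fun j => Finsupp.mem_support_iff.mpr
        fun h => hxs (prod_eq_zero (mem_univ j) h),
    fun xs => (Finsupp.onFinset_apply ..).trans_ge (prod_nonneg fun j _ => P.2.1 (xs j)), by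
      rw [Finsupp.onFinset_sum _ fun _ => rfl]
      simpa [P.expect_const] using P.sum_piFinset_prod_mul m fun _ => 1⟩

lemma expect_pi_prod (m : ℕ) (h : X → ℝ) :
    (P.pi m).expect (fun xs => ∏ j, h (xs j)) = P.expect h ^ m := by
  rw [expect, pi, Finsupp.onFinset_sum _ fun _ => zero_mul _, ← P.sum_piFinset_prod_mul]
  exact sum_congr rfl fun xs _ => prod_mul_distrib.symm

lemma expect_exp_le {f : X → ℝ} (hf : ∀ x, f x = 0 ∨ f x = 1) {l : ℝ} (hl : |l| ≤ 1) :
    P.expect (fun x => exp (l * (f x - P.expect f))) ≤ exp (l ^ 2) := by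
  set μ := P.expect f
  have hμ₀ : 0 ≤ μ := P.expect_nonneg fun x => by rcases hf x with h | h <;> simp [h]
  have hμ₁ : μ ≤ 1 := (P.expect_mono fun x => by rcases hf x with h | h <;> simp [h]).trans
    (P.expect_const 1).le
  -- on `{0,1}` the exponential is affine in `f`
  have haffine : ∀ x,
      exp (l * (f x - μ)) = exp (-(l * μ)) * 1 + exp (-(l * μ)) * (exp l - 1) * f x := by
    intro x
    rcases hf x with h | h <;> rw [h]
    · ring_nf
    · rw [show l * (1 - μ) = l + -(l * μ) by ring, exp_add]; ring
  have hquad : exp l - 1 - l ≤ l ^ 2 := (le_abs_self _).trans (abs_exp_sub_one_sub_id_le hl)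
  have hexp : 0 ≤ exp l - 1 - l := by linarith [add_one_le_exp l]
  calc P.expect (fun x => exp (l * (f x - μ)))
      = exp (-(l * μ)) * (1 + (exp l - 1) * μ) := by
        simp only [haffine, expect_add, expect_const_mul, expect_const]; ring
    _ ≤ exp (-(l * μ)) * exp ((exp l - 1) * μ) := by
        gcongr; linarith [add_one_le_exp ((exp l - 1) * μ)]
    _ = exp (μ * (exp l - 1 - l)) := by rw [← exp_add]; ring_nf
    _ ≤ exp (l ^ 2) := exp_le_exp.mpr (by nlinarith)

lemma one_le_exp_add_exp_of_le_abs {x c l : ℝ} (hl : 0 ≤ l) (hc : c ≤ |x|) :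
    1 ≤ exp (l * x - l * c) + exp (-l * x - l * c) := by
  have h := one_le_exp (sub_nonneg.mpr (mul_le_mul_of_nonneg_left hc hl))
  rcases abs_cases x with ⟨hx, -⟩ | ⟨hx, -⟩ <;> rw [hx] at h
  · linarith [exp_pos (-l * x - l * c)]
  · rw [mul_neg, ← neg_mul] at h
    linarith [exp_pos (l * x - l * c)]

lemma expect_pi_exp_le (m : ℕ) {f : X → ℝ} (hf : ∀ x, f x = 0 ∨ f x = 1) {l : ℝ}
    (hl : |l| ≤ 1) (c : ℝ) :
    (P.pi m).expect (fun xs => exp (l * ∑ j, (f (xs j) - P.expect f) - c)) ≤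
      exp (m * l ^ 2 - c) := by
  have hprod : (P.pi m).expect (fun xs => exp (l * ∑ j, (f (xs j) - P.expect f))) ≤
      exp (m * l ^ 2) := by
    simp_rw [mul_sum, exp_sum]
    refine (P.expect_pi_prod m fun x => exp (l * (f x - P.expect f))).trans_le ?_
    rw [exp_nat_mul]
    exact pow_le_pow_left₀ (P.expect_nonneg fun _ => (exp_pos _).le) (P.expect_exp_le hf hl) m
  simp only [sub_eq_add_neg _ c, exp_add, mul_comm _ (exp (-c)), expect_const_mul]
  gcongr

/-- Hoeffding's bound for each `f i` and a union bound: the samples on which some empirical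
mean is off by more than `δ` have total probability `< 1`. -/
theorem exists_sample_forall_abs_sub_expect_le {ι : Type*} [Fintype ι] {f : ι → X → ℝ}
    (hf : ∀ i x, f i x = 0 ∨ f i x = 1) {δ : ℝ} (hδ₀ : 0 ≤ δ) (hδ₂ : δ ≤ 2) {m : ℕ}
    (hm : 0 < m) (hcard : Fintype.card ι * (2 * exp (-(m * δ ^ 2 / 4))) < 1) :
    ∃ xs : Fin m → X, ∀ i, |(∑ j, f i (xs j)) / m - P.expect (f i)| ≤ δ := by
  by_contra! hbad
  set S : ι → (Fin m → X) → ℝ := fun i xs => ∑ j, (f i (xs j) - P.expect (f i))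
  set l := δ / 2 with hl_def
  have hl₀ : 0 ≤ l := by positivity
  set E : ι → (Fin m → X) → ℝ := fun i xs =>
    exp (l * S i xs - l * (m * δ)) + exp (-l * S i xs - l * (m * δ))
  have hmR : (0 : ℝ) < m := Nat.cast_pos.mpr hm
  have hbad_le : ∀ xs, 1 ≤ ∑ i, E i xs := by
    intro xs
    obtain ⟨i, hi⟩ := hbad xs
    have hdev : m * δ ≤ |S i xs| := by
      have : S i xs = m * ((∑ j, f i (xs j)) / m - P.expect (f i)) := by
        simp only [S, sum_sub_distrib, sum_const, card_univ, Fintype.card_fin, nsmul_eq_mul]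
        field_simp
      rw [this, abs_mul, abs_of_pos hmR]
      exact mul_le_mul_of_nonneg_left hi.le hmR.le
    exact (one_le_exp_add_exp_of_le_abs hl₀ hdev).trans
      (single_le_sum (f := (E · xs)) (fun i _ => by positivity) (mem_univ i))
  have hE : ∀ i, (P.pi m).expect (E i) ≤ 2 * exp (-(m * δ ^ 2 / 4)) := by
    intro i
    have hl : |l| ≤ 1 := by rw [abs_of_nonneg hl₀]; linarith
    have hexp : (m : ℝ) * l ^ 2 - l * (m * δ) = -(m * δ ^ 2 / 4) := by rw [hl_def]; ring
    have hpos := P.expect_pi_exp_le m (hf i) hl (l * (m * δ))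
    have hneg := P.expect_pi_exp_le m (hf i) (l := -l) (by rwa [abs_neg]) (l * (m * δ))
    rw [neg_sq, hexp] at hneg
    rw [hexp] at hpos
    rw [expect_add]
    linarith
  have := calc (1 : ℝ)
      = (P.pi m).expect fun _ => 1 := (expect_const _ 1).symm
    _ ≤ (P.pi m).expect fun xs => ∑ i, E i xs := expect_mono _ hbad_le
    _ ≤ ∑ _i : ι, 2 * exp (-(m * δ ^ 2 / 4)) := by
        rw [expect_finset_sum]
        exact sum_le_sum fun i _ => hE i
    _ = Fintype.card ι * (2 * exp (-(m * δ ^ 2 / 4))) := by simp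
  linarith

end FinDist

section BlockExpansion

variable {X : Type*} (m : ℕ)

def block (b : List Bool) (k : ℕ) : Fin m → Bool := fun i => b.getD (k * m + i) false

/-- The branch of a tree of depth `n` encoded by `n` blocks of `m` labels, the rule `r` turning
the block at depth `k` into the direction taken there. -/
def decodePath (r : List Bool → (Fin m → Bool) → Bool) (b : List Bool) : ℕ → List Bool :=
  followPath fun w => r w (block m b w.length)

lemma decodePath_take (r : List Bool → (Fin m → Bool) → Bool) (b : List Bool) {j k : ℕ}
    (hkj : k * m ≤ j) : decodePath m r (b.take j) k = decodePath m r b k := by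
  refine followPath_congr _ fun k' hk' => ?_
  congr 1
  funext i
  have : k' * m + i < j := by nlinarith [i.2]
  simp only [block, length_followPath, List.getD_eq_getElem?_getD, List.getElem?_take_of_lt this]

variable [NeZero m]

/-- The tree of depth `n * m` in which each node `w` of a tree of depth `n` is replaced by a block
`σ w` of `m` points; the node whose block is used is decoded from the labels seen so far. -/
def expandTree (σ : List Bool → Fin m → X) (r : List Bool → (Fin m → Bool) → Bool)
    (b : List Bool) : X :=
  σ (decodePath m r b (b.length / m)) (Fin.ofNat m b.length)

lemma decodePath_labelPath_expandTree (σ : List Bool → Fin m → X)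
    (r : List Bool → (Fin m → Bool) → Bool) (f : X → ℝ) (n : ℕ) :
    decodePath m r (labelPath (expandTree m σ r) f (n * m)) n =
      followPath (fun w => r w fun i => decide (f (σ w i) = 1)) n := by
  refine followPath_congr _ fun k hk => ?_
  simp only [length_followPath]
  congr 1
  funext i
  have hlt : k * m + i < n * m := by nlinarith [i.2]
  have hdiv : (k * m + i) / m = k := by
    rw [Nat.add_comm, Nat.add_mul_div_right _ _ (Nat.pos_of_neZero m),
      Nat.div_eq_of_lt i.2, zero_add]
  have hmod : Fin.ofNat m (k * m + i) = i := by
    ext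
    simp [Nat.mod_eq_of_lt i.2]
  change (followPath _ (n * m)).getD (k * m + i) false = _
  rw [getD_followPath _ hlt, expandTree, length_followPath, hdiv, hmod,
    ← take_followPath _ hlt.le, decodePath_take m r _ le_self_add]
  rfl

end BlockExpansion

section Mixtures

open Real

variable {X : Type*}

noncomputable def meanThreshold (m : ℕ) (s : List Bool → ℝ) (w : List Bool)
    (bits : Fin m → Bool) : Bool :=
  decide (s w < (∑ i, if bits i then (1 : ℝ) else 0) / m)

lemma decodePath_meanThreshold (m : ℕ) [NeZero m] {s : List Bool → ℝ}
    {σ : List Bool → Fin m → X} {f : X → ℝ} (hf : ∀ x, f x = 0 ∨ f x = 1) {ε : ℕ → Bool}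
    {n : ℕ} (h : ∀ k < n, decide (s (pathPrefix ε k) < (∑ i, f (σ (pathPrefix ε k) i)) / m) = ε k) :
    decodePath m (meanThreshold m s)
      (labelPath (expandTree m σ (meanThreshold m s)) f (n * m)) n = pathPrefix ε n := by
  rw [decodePath_labelPath_expandTree, pathPrefix_eq_followPath]
  refine (followPath_congr _ fun k hk => ?_).symm
  have hmean : ∀ w, (∑ i, if decide (f (σ w i) = 1) then (1 : ℝ) else 0) = ∑ i, f (σ w i) :=
    fun w => Finset.sum_congr rfl fun i _ => by rcases hf (σ w i) with h | h <;> simp [h]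
  rw [← pathPrefix_eq_followPath, meanThreshold, hmean, length_pathPrefix, h k hk]

lemma decide_lt_eq_of_abs_sub_le {s a e α : ℝ} {b : Bool} (hα : 0 < α)
    (ha : |a - e| ≤ α / 4) (he : (if b then e - s else s - e) ≥ α / 2) :
    decide (s < a) = b := by
  have := abs_le.mp ha
  cases b <;> simp only [Bool.false_eq_true, ↓reduceIte] at he
  · exact decide_eq_false (not_lt.mpr (by linarith))
  · exact decide_eq_true (by linarith)

theorem two_pow_le_of_isShattered_mixClass {F : Set (X → ℝ)}
    (hF : ∀ f ∈ F, ∀ x, f x = 0 ∨ f x = 1) {d : ℕ} (hno : ∀ y, ¬ BShatters F (d + 1) y)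
    {α : ℝ} (hα : 0 < α) (hα₁ : α ≤ 1) {N m : ℕ} (hN : IsShattered (mixClass F) α N)
    (hm : 0 < m) (hcard : 2 ^ N * (2 * exp (-(m * α ^ 2 / 64))) < 1) :
    2 ^ N ≤ (N * m + 1) ^ d := by
  have : NeZero m := ⟨hm.ne'⟩
  obtain ⟨P, s, hPs⟩ := hN
  let ε : (Fin N → Bool) → ℕ → Bool := fun ζ t => if h : t < N then ζ ⟨t, h⟩ else false
  have hmargin : ∀ ζ, ∃ f ∈ F, ∀ t < N,
      (if ε ζ t then (P (pathPrefix (ε ζ) t)).expect f - s (pathPrefix (ε ζ) t)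
        else s (pathPrefix (ε ζ) t) - (P (pathPrefix (ε ζ) t)).expect f) ≥ α / 2 := by
    intro ζ
    obtain ⟨g, ⟨f, hf, hg⟩, h⟩ := hPs (ε ζ)
    refine ⟨f, hf, fun t ht => ?_⟩
    have := h t ht
    rwa [hg] at this
  choose f hfF hf using hmargin
  have hsample : ∀ w, ∃ xs : Fin m → X,
      ∀ ζ, |(∑ j, f ζ (xs j)) / m - (P w).expect (f ζ)| ≤ α / 4 := fun w =>
    (P w).exists_sample_forall_abs_sub_expect_le (fun ζ => hF _ (hfF ζ)) (by positivity)
      (by linarith) hm (by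
        rw [Fintype.card_fun, Fintype.card_bool, Fintype.card_fin,
          show (m : ℝ) * (α / 4) ^ 2 / 4 = m * α ^ 2 / 64 by ring]
        exact_mod_cast hcard)
  choose σ hσ using hsample
  set y := expandTree m σ (meanThreshold m s)
  have hdecode : ∀ ζ, decodePath m (meanThreshold m s) (labelPath y (f ζ) (N * m)) N =
      List.ofFn ζ := fun ζ => by
    rw [decodePath_meanThreshold m (hF _ (hfF ζ)) fun k hk =>
      decide_lt_eq_of_abs_sub_le hα (hσ _ ζ) (hf ζ k hk)]
    simp [pathPrefix, ε]
  have hinj : Function.Injective fun ζ => labelPath y (f ζ) (N * m) := fun ζ ζ' h =>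
    List.ofFn_injective (by rw [← hdecode ζ, ← hdecode ζ']; exact congrArg (decodePath m _ · N) h)
  have hfinite : ((labelPath y · (N * m)) '' F).Finite :=
    (List.finite_length_eq Bool (N * m)).subset (by rintro _ ⟨g, -, rfl⟩; simp [labelPath])
  calc 2 ^ N = (Set.univ : Set (Fin N → Bool)).ncard := by simp
    _ ≤ ((labelPath y · (N * m)) '' F).ncard :=
      Set.ncard_le_ncard_of_injOn _ (fun ζ _ => ⟨f ζ, hfF ζ, rfl⟩) hinj.injOn hfinite
    _ ≤ (N * m + 1) ^ d := ncard_labelPath_image_le hF hno y (N * m)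

end Mixtures

section Arithmetic

open Real

lemma two_pow_mul_exp_neg_lt_one {N : ℕ} {x : ℝ} (hx : N + 1 ≤ x) :
    2 ^ N * (2 * exp (-x)) < 1 := by
  have h2e : (2 : ℝ) ^ (N + 1) < exp 1 ^ (N + 1) :=
    pow_lt_pow_left₀ (by linarith [exp_one_gt_d9]) (by norm_num) (Nat.succ_ne_zero N)
  rw [← exp_nat_mul, mul_one] at h2e
  calc 2 ^ N * (2 * exp (-x)) ≤ 2 ^ (N + 1) * exp (-(N + 1 : ℕ)) := by
        rw [pow_succ, mul_assoc]
        gcongr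
        push_cast
        exact hx
    _ < exp (N + 1 : ℕ) * exp (-(N + 1 : ℕ)) := by gcongr
    _ = 1 := by rw [← exp_add, add_neg_cancel, exp_zero]

lemma le_mul_log_of_two_pow_le {N d : ℕ} {α : ℝ} (hα : 0 < α) (hα₁ : α ≤ 1)
    (h : (2 : ℝ) ^ N ≤ (66 * (N + 1) ^ 2 / α ^ 2) ^ d) :
    (N : ℝ) ≤ 200 * d * log (200 * d / α) := by
  rcases Nat.eq_zero_or_pos d with rfl | hd
  · have hN : N = 0 := by
      by_contra hN
      have := one_lt_pow₀ (one_lt_two : (1 : ℝ) < 2) hN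
      simp at h
      linarith
    simp [hN]
  have hd₁ : (1 : ℝ) ≤ d := Nat.one_le_cast.mpr hd
  have hd₀ : (0 : ℝ) < d := by linarith
  have hN₁ : (0 : ℝ) < N + 1 := by positivity
  have hlog : N * log 2 ≤ d * log 66 + 2 * (d * log (N + 1)) - 2 * (d * log α) := by
    have := log_le_log (by positivity) h
    rw [log_pow, log_pow, log_div (by positivity) (by positivity), log_mul (by norm_num)
      (by positivity), log_pow, log_pow] at this
    push_cast at this
    linarith
  have hlogN : log (N + 1) ≤ (N + 1) / (12 * d) + log 12 + log d := by
    have := log_le_sub_one_of_pos (show 0 < (N + 1 : ℝ) / (12 * d) by positivity)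
    rw [log_div hN₁.ne' (by positivity), log_mul (by norm_num) hd₀.ne'] at this
    linarith
  have hlogN' : d * log (N + 1) ≤ (N + 1) / 12 + d * log 12 + d * log d := by
    have := mul_le_mul_of_nonneg_left hlogN hd₀.le
    have hcancel : (d : ℝ) * ((N + 1) / (12 * d)) = (N + 1) / 12 := by field_simp
    rwa [mul_add, mul_add, hcancel] at this
  have hlog2 : N * (2 / 3) ≤ N * log 2 :=
    mul_le_mul_of_nonneg_left (by linarith [log_two_gt_d9]) N.cast_nonneg
  have hlog66 : d * log 66 ≤ d * 65 := mul_le_mul_of_nonneg_left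
    (by linarith [log_le_sub_one_of_pos (show (0 : ℝ) < 66 by norm_num)]) hd₀.le
  have hlog12 : d * log 12 ≤ d * 11 := mul_le_mul_of_nonneg_left
    (by linarith [log_le_sub_one_of_pos (show (0 : ℝ) < 12 by norm_num)]) hd₀.le
  have hlog200 : d * (199 / 200) ≤ d * log 200 := mul_le_mul_of_nonneg_left
    (by linarith [one_sub_inv_le_log_of_pos (show (0 : ℝ) < 200 by norm_num)]) hd₀.le
  have hlogd : 0 ≤ d * log d := mul_nonneg hd₀.le (log_nonneg hd₁)
  have hlogα : d * log α ≤ 0 := mul_nonpos_of_nonneg_of_nonpos hd₀.le (log_nonpos hα.le hα₁)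
  rw [log_div (by positivity) hα.ne', log_mul (by norm_num) hd₀.ne']
  linarith

lemma add_one_le_ceil_mul_sq_div {N : ℕ} {α : ℝ} (hα : 0 < α) :
    (N : ℝ) + 1 ≤ ⌈64 * ((N : ℝ) + 1) / α ^ 2⌉₊ * α ^ 2 / 64 := by
  have := Nat.le_ceil (64 * ((N : ℝ) + 1) / α ^ 2)
  rw [div_le_iff₀ (by positivity)] at this
  linarith

lemma mul_ceil_add_one_le {N : ℕ} {α : ℝ} (hα : 0 < α) (hα₁ : α ≤ 1) :
    (N : ℝ) * ⌈64 * ((N : ℝ) + 1) / α ^ 2⌉₊ + 1 ≤ 66 * (N + 1) ^ 2 / α ^ 2 := by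
  have hu : (1 : ℝ) ≤ (N + 1) / α ^ 2 := by
    rw [le_div_iff₀ (by positivity)]
    nlinarith
  have hm : (⌈64 * ((N : ℝ) + 1) / α ^ 2⌉₊ : ℝ) ≤ 65 * ((N + 1) / α ^ 2) := by
    have := Nat.ceil_lt_add_one (show 0 ≤ 64 * ((N : ℝ) + 1) / α ^ 2 by positivity)
    linarith [mul_div_assoc 64 ((N : ℝ) + 1) (α ^ 2)]
  rw [show 66 * ((N : ℝ) + 1) ^ 2 / α ^ 2 = 66 * (N + 1) * ((N + 1) / α ^ 2) by ring]
  nlinarith [mul_le_mul_of_nonneg_left hm N.cast_nonneg]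

end Arithmetic

/-- there is a universal constant `C > 0` such that for any binary class
`F ⊆ {0,1}^X` with `Ldim(F) ≤ d` and any scale `α ∈ (0,1]`,
`sfat_α(mix(F)) ≤ C·d·log(Cd/α)` (every depth `N` that `mix(F)` `α`-shatters satisfies
`N ≤ C·d·log(Cd/α)`). -/
theorem stmt16 : ∃ C : ℝ, 0 < C ∧
    ∀ (X : Type) (F : Set (X → ℝ)), (∀ f ∈ F, ∀ x, f x = 0 ∨ f x = 1) →
      ∀ α : ℝ, 0 < α → α ≤ 1 → ∀ d : ℕ, Ldim F ≤ (d : ℕ∞) →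
        ∀ N : ℕ, IsShattered (mixClass F) α N →
          (N : ℝ) ≤ C * d * Real.log (C * d / α) := by
  refine ⟨200, by norm_num, fun X F hF α hα hα₁ d hd N hN => ?_⟩
  set m := ⌈64 * ((N : ℝ) + 1) / α ^ 2⌉₊
  have hpow : 2 ^ N ≤ (N * m + 1) ^ d :=
    two_pow_le_of_isShattered_mixClass hF (not_bShatters_of_Ldim_le hd) hα hα₁ hN
      (Nat.ceil_pos.mpr (by positivity))
      (two_pow_mul_exp_neg_lt_one (add_one_le_ceil_mul_sq_div hα))
  refine le_mul_log_of_two_pow_le hα hα₁ ?_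
  calc (2 : ℝ) ^ N ≤ (N * m + 1) ^ d := by exact_mod_cast hpow
    _ ≤ (66 * (N + 1) ^ 2 / α ^ 2) ^ d :=
      pow_le_pow_left₀ (by positivity) (mul_ceil_add_one_le hα hα₁) d
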